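/- Let βV : Δ⁺ → ℕ be non-decreasing in the first variable and non-increasing in the second, and let βY : Δ⁺ → ℕ satisfy the sandwich inequality βV(u − ω, v + ω) ≤ βY(u, v) ≤ βV(u + ω, v − ω) whenever u + ω ≺ v − ω, where ω = (Ω,…,Ω), Ω ≥ 0. If βY(ū, v̄) ≠ βV(ū, v̄) at some (ū, v̄) ∈ Δ⁺, then either the closed max-norm ball of radius Ω around (ū, v̄) meets the complement of Δ⁺, or βV is not constant on that closed ball. -/

import Mathlib

/-- `Δ⁺ = {(u,v) ∈ ℝⁿ×ℝⁿ : u ≺ v}` (strict componentwise order). -/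
def Dplus (n : ℕ) : Set ((Fin n → ℝ) × (Fin n → ℝ)) := {p | ∀ j, p.1 j < p.2 j}

/-! The ball of radius `Ω` contains the two corners `(ū + ω, v̄ - ω)` and `(ū - ω, v̄ + ω)`.
If it lies inside `Δ⁺`, the first corner gives `ū + ω ≺ v̄ - ω`, so the sandwich inequality
applies at `(ū, v̄)`; if moreover `βV` is constant on the ball, both sides of the sandwich equal
`βV(ū, v̄)`, which forces `βY(ū, v̄) = βV(ū, v̄)`. -/

theorem mem_closedBall_prod_pi_iff {ι : Type*} [Fintype ι] {p q : (ι → ℝ) × (ι → ℝ)} {r : ℝ}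
    (hr : 0 ≤ r) :
    q ∈ Metric.closedBall p r ↔ ∀ j, |q.1 j - p.1 j| ≤ r ∧ |q.2 j - p.2 j| ≤ r := by
  simp only [Metric.mem_closedBall, Prod.dist_eq, max_le_iff, dist_pi_le_iff hr, Real.dist_eq,
    forall_and]

theorem near_boundary_or_discontinuity_of_ne_general {n : ℕ}
    (βY βV : ((Fin n → ℝ) × (Fin n → ℝ)) → ℕ) (Ω : ℝ) (hΩ : 0 ≤ Ω)
    (hsand : ∀ u v : Fin n → ℝ, (∀ j, u j + Ω < v j - Ω) →
      βV (fun j => u j - Ω, fun j => v j + Ω) ≤ βY (u, v) ∧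
      βY (u, v) ≤ βV (fun j => u j + Ω, fun j => v j - Ω))
    (p₀ : (Fin n → ℝ) × (Fin n → ℝ))
    (hne : βY p₀ ≠ βV p₀) :
    (∃ q ∈ Metric.closedBall p₀ Ω, q ∉ Dplus n) ∨
    (∃ q ∈ Metric.closedBall p₀ Ω, ∃ q' ∈ Metric.closedBall p₀ Ω, βV q ≠ βV q') := by
  by_contra! h
  obtain ⟨hin, hconst⟩ := h
  obtain ⟨u, v⟩ := p₀
  have hΩ' : |Ω| ≤ Ω := (abs_of_nonneg hΩ).le
  have hcorner : ∀ s t : ℝ, |s| ≤ Ω → |t| ≤ Ω →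
      ((fun j => u j + s, fun j => v j + t) : (Fin n → ℝ) × (Fin n → ℝ)) ∈
        Metric.closedBall (u, v) Ω := fun s t hs ht =>
    (mem_closedBall_prod_pi_iff hΩ).2 fun j => by simp [hs, ht]
  have hupper := hcorner Ω (-Ω) hΩ' (by rwa [abs_neg])
  have hlower := hcorner (-Ω) Ω (by rwa [abs_neg]) hΩ'
  simp only [← sub_eq_add_neg] at hupper hlower
  have hcenter := Metric.mem_closedBall_self (x := (u, v)) hΩ
  obtain ⟨hle, hge⟩ := hsand u v (hin _ hupper)
  rw [hconst _ hlower _ hcenter] at hle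
  rw [hconst _ hupper _ hcenter] at hge
  exact hne (le_antisymm hge hle)

/-- blind strips, contrapositive form: under the sandwich inequality and
monotonicity of `βV`, if `βY(ū,v̄) ≠ βV(ū,v̄)` at `(ū,v̄) ∈ Δ⁺`, then the closed max-norm
ball of radius `Ω` around `(ū,v̄)` meets the complement of `Δ⁺`, or `βV` is not constant
on that closed ball. -/
theorem near_boundary_or_discontinuity_of_ne {n : ℕ}
    (βY βV : ((Fin n → ℝ) × (Fin n → ℝ)) → ℕ) (Ω : ℝ) (hΩ : 0 ≤ Ω)
    (hmono₁ : ∀ u u' v : Fin n → ℝ, (u, v) ∈ Dplus n → (u', v) ∈ Dplus n →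
      u ≤ u' → βV (u, v) ≤ βV (u', v))
    (hmono₂ : ∀ u v v' : Fin n → ℝ, (u, v) ∈ Dplus n → (u, v') ∈ Dplus n →
      v ≤ v' → βV (u, v') ≤ βV (u, v))
    (hsand : ∀ u v : Fin n → ℝ, (∀ j, u j + Ω < v j - Ω) →
      βV (fun j => u j - Ω, fun j => v j + Ω) ≤ βY (u, v) ∧
      βY (u, v) ≤ βV (fun j => u j + Ω, fun j => v j - Ω))
    (p₀ : (Fin n → ℝ) × (Fin n → ℝ)) (hp₀ : p₀ ∈ Dplus n)
    (hne : βY p₀ ≠ βV p₀) :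
    (∃ q ∈ Metric.closedBall p₀ Ω, q ∉ Dplus n) ∨
    (∃ q ∈ Metric.closedBall p₀ Ω, ∃ q' ∈ Metric.closedBall p₀ Ω, βV q ≠ βV q') :=
  near_boundary_or_discontinuity_of_ne_general βY βV Ω hΩ hsand p₀ hne
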